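/- arXiv:2510.27435 — 6 statements merged into one kernel-verified Lean document; each statement's English description precedes it below -/
import Mathlib

section
/- Let h : ℕ → ℕ be strictly increasing with h(n) ≥ 1 for all n. Then fE(h) is not an ideal: there exist sets A, B ∈ fE(h) such that A ∪ B ∉ fE(h) (indeed, no set C ∈ fE(h) contains A ∪ B). -/
open Filter Set

/-- The basic clopen set `[σ]` in the Baire space determined by a finite sequence `σ`. -/
def cylinder (σ : List ℕ) : Set (ℕ → ℕ) :=
  {x | ∀ i : Fin σ.length, x i = σ.get i}

/-- `limsup_n h(n) = ∞`, i.e. `h` takes arbitrarily large values frequently. -/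
def LimsupInfty (h : ℕ → ℕ) : Prop :=
  ∀ m : ℕ, ∃ᶠ n in Filter.atTop, m ≤ h n

/-- The family `fN(h)` of fake null sets: `F ∈ fN(h)` iff for every `ε > 0` there is a
sequence of finite sequences `σ_n` with `∑ 1/h(|σ_n|) < ε` covering `F`. -/
def fN (h : ℕ → ℕ) (F : Set (ℕ → ℕ)) : Prop :=
  ∀ ε : ℝ, 0 < ε →
    ∃ σ : ℕ → List ℕ,
      Summable (fun n => (1 : ℝ) / (h (σ n).length : ℝ)) ∧
      (∑' n, (1 : ℝ) / (h (σ n).length : ℝ)) < ε ∧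
      F ⊆ ⋃ n, cylinder (σ n)

/-- The restriction of `x` to the interval `[l, u)`, extended by `0` elsewhere. -/
def restrIco (x : ℕ → ℕ) (l u : ℕ) : ℕ → ℕ :=
  fun i => if l ≤ i ∧ i < u then x i else 0

/-- `J` is a set of patterns on the interval `[l, u)`: every element vanishes off `[l, u)`. -/
def SuppIco (l u : ℕ) (J : Set (ℕ → ℕ)) : Prop :=
  ∀ σ ∈ J, ∀ i, ¬ (l ≤ i ∧ i < u) → σ i = 0

/-- The family `fE(h)`: partition `ℕ` into consecutive nonempty intervals `I_n = [a n, a (n+1))`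
(`a 0 = 0`, `a` strictly increasing), patterns `J_n ⊆ ω^{I_n}` with `∑ |J_n|/h(|I_n|) < ∞`,
and `F ⊆ {x : x↾I_n ∈ J_n for all but finitely many n}`. -/
def fE (h : ℕ → ℕ) (F : Set (ℕ → ℕ)) : Prop :=
  ∃ a : ℕ → ℕ, a 0 = 0 ∧ StrictMono a ∧
    ∃ J : ℕ → Set (ℕ → ℕ),
      (∀ n, SuppIco (a n) (a (n+1)) (J n)) ∧
      (∀ n, (J n).Finite) ∧
      Summable (fun n => ((J n).ncard : ℝ) / (h (a (n+1) - a n) : ℝ)) ∧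
      F ⊆ {x | ∀ᶠ n in Filter.atTop, restrIco x (a n) (a (n+1)) ∈ J n}

/-- The family `fS(h)` of fake small sets: as `fE(h)` but with
`x↾I_n ∈ J_n` for infinitely many `n`. -/
def fS (h : ℕ → ℕ) (F : Set (ℕ → ℕ)) : Prop :=
  ∃ a : ℕ → ℕ, a 0 = 0 ∧ StrictMono a ∧
    ∃ J : ℕ → Set (ℕ → ℕ),
      (∀ n, SuppIco (a n) (a (n+1)) (J n)) ∧
      (∀ n, (J n).Finite) ∧
      Summable (fun n => ((J n).ncard : ℝ) / (h (a (n+1) - a n) : ℝ)) ∧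
      F ⊆ {x | ∃ᶠ n in Filter.atTop, restrIco x (a n) (a (n+1)) ∈ J n}

/-- The family `fE(Fin)`: as `fE(h)` but one only requires each pattern set `J_n` to be finite. -/
def fEFin (F : Set (ℕ → ℕ)) : Prop :=
  ∃ a : ℕ → ℕ, a 0 = 0 ∧ StrictMono a ∧
    ∃ J : ℕ → Set (ℕ → ℕ),
      (∀ n, SuppIco (a n) (a (n+1)) (J n)) ∧
      (∀ n, (J n).Finite) ∧
      F ⊆ {x | ∀ᶠ n in Filter.atTop, restrIco x (a n) (a (n+1)) ∈ J n}

/-- The family `fS(Fin)`: as `fS(h)` but one only requires each pattern set `J_n` to be finite. -/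
def fSFin (F : Set (ℕ → ℕ)) : Prop :=
  ∃ a : ℕ → ℕ, a 0 = 0 ∧ StrictMono a ∧
    ∃ J : ℕ → Set (ℕ → ℕ),
      (∀ n, SuppIco (a n) (a (n+1)) (J n)) ∧
      (∀ n, (J n).Finite) ∧
      F ⊆ {x | ∃ᶠ n in Filter.atTop, restrIco x (a n) (a (n+1)) ∈ J n}

/-- The family `fN(Fin)`: there are finite `S_n ⊆ ω^n` with
`F ⊆ {x : x↾n ∈ S_n for infinitely many n}`. -/
def fNFin (F : Set (ℕ → ℕ)) : Prop :=
  ∃ S : (n : ℕ) → Set (Fin n → ℕ),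
    (∀ n, (S n).Finite) ∧
    F ⊆ {x | ∃ᶠ n in Filter.atTop, (fun i : Fin n => x i) ∈ S n}

/-- The σ-ideal `M_-`: there are `x_F ∈ ω^ω` and a partition of `ℕ` into consecutive nonempty
intervals `I_n = [a n, a (n+1))` with `F ⊆ {x : x↾I_n ≠ x_F↾I_n for all but finitely many n}`. -/
def Mminus (F : Set (ℕ → ℕ)) : Prop :=
  ∃ xF : ℕ → ℕ, ∃ a : ℕ → ℕ, a 0 = 0 ∧ StrictMono a ∧
    F ⊆ {x | ∀ᶠ n in Filter.atTop, ∃ i, a n ≤ i ∧ i < a (n+1) ∧ x i ≠ xF i}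

/-! ### Auxiliary constructions for stmt12 -/

/-- Rapidly increasing merged boundary sequence. -/
def tseq (h : ℕ → ℕ) : ℕ → ℕ
  | 0 => 0
  | k + 1 => tseq h k + 2 ^ (k + 2) * h (tseq h k) + 1

lemma tseq_succ (h : ℕ → ℕ) (k : ℕ) :
    tseq h (k+1) = tseq h k + 2 ^ (k + 2) * h (tseq h k) + 1 := rfl

lemma tseq_mono (h : ℕ → ℕ) : StrictMono (tseq h) :=
  strictMono_nat_of_lt_succ (fun k => by rw [tseq_succ]; omega)

/-- Constant pattern with value `w` on the block `[a m, a (m+1))`. -/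
def pat (a : ℕ → ℕ) (m w : ℕ) : ℕ → ℕ :=
  fun i => if a m ≤ i ∧ i < a (m+1) then w else 0

/-- Pattern sets consisting of constants below `s m`. -/
def Jc (a s : ℕ → ℕ) (m : ℕ) : Set (ℕ → ℕ) := pat a m '' (Set.Iio (s m))

lemma ncard_Jc_le (a s : ℕ → ℕ) (m : ℕ) : (Jc a s m).ncard ≤ s m := by
  have h1 : (Jc a s m).ncard ≤ (Set.Iio (s m)).ncard :=
    Set.ncard_image_le (Set.finite_Iio _)
  have h2 : (Set.Iio (s m)).ncard = s m := by
    rw [Set.ncard_eq_toFinset_card']; simp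
  omega

lemma fE_of_const (h : ℕ → ℕ) (h1 : ∀ n, 1 ≤ h n) (a s : ℕ → ℕ) (ha0 : a 0 = 0)
    (ha : StrictMono a)
    (hsum : Summable (fun m => ((s m : ℝ)) / (h (a (m+1) - a m) : ℝ))) :
    fE h {x | ∀ᶠ m in Filter.atTop, restrIco x (a m) (a (m+1)) ∈ Jc a s m} := by
  refine ⟨a, ha0, ha, Jc a s, ?_, fun m => (Set.finite_Iio _).image _, ?_, subset_rfl⟩
  · rintro m σ ⟨w, -, rfl⟩ i hi
    simp only [pat, if_neg hi]
  · apply Summable.of_nonneg_of_le (fun m => by positivity) _ hsum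
    intro m
    gcongr
    exact_mod_cast ncard_Jc_le a s m

/-- The key diagonalization: given the freedom hypothesis `H`, produce an element of the
full constant-pattern set escaping the `J n`-conditions infinitely often. -/
lemma escape (a s c : ℕ → ℕ) (ha0 : a 0 = 0) (ha : StrictMono a) (hc : StrictMono c)
    (hs : ∀ m, 1 ≤ s m) (J : ℕ → Set (ℕ → ℕ)) (hJf : ∀ n, (J n).Finite)
    (H : ∀ M, ∃ n m, M ≤ m ∧ a m ≤ c (n+1) - 1 ∧ c (n+1) - 1 < a (m+1) ∧ (J n).ncard < s m) :
    ∃ x : ℕ → ℕ, (∀ m, restrIco x (a m) (a (m+1)) ∈ Jc a s m) ∧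
      ∃ᶠ n in Filter.atTop, restrIco x (c n) (c (n+1)) ∉ J n := by
  classical
  have hex : ∀ i : ℕ, ∃ m, i < a (m+1) :=
    fun i => ⟨i, lt_of_lt_of_le (Nat.lt_succ_self i) ha.le_apply⟩
  -- block index
  have bo_le : ∀ i, a (Nat.find (hex i)) ≤ i := by
    intro i
    cases hbo : Nat.find (hex i) with
    | zero => rw [ha0]; exact Nat.zero_le i
    | succ k =>
      have hk : ¬ i < a (k+1) := Nat.find_min (hex i) (by omega)
      omega
  have bo_eq : ∀ i m, a m ≤ i → i < a (m+1) → Nat.find (hex i) = m := by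
    intro i m h1 h2
    rcases lt_trichotomy (Nat.find (hex i)) m with hlt | he | hgt
    · have h3 : a (Nat.find (hex i) + 1) ≤ a m := ha.monotone (by omega)
      have h4 := Nat.find_spec (hex i)
      omega
    · exact he
    · have h3 : a (m+1) ≤ a (Nat.find (hex i)) := ha.monotone (by omega)
      have h4 := bo_le i
      omega
  -- dodge data: for each block, a (choice of) C-block index and an escaping value
  have dodge : ∀ m, ∃ p : ℕ × ℕ, p.2 < s m ∧
      ((∃ n, a m ≤ c (n+1) - 1 ∧ c (n+1) - 1 < a (m+1) ∧ (J n).ncard < s m) →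
        (a m ≤ c (p.1+1) - 1 ∧ c (p.1+1) - 1 < a (m+1) ∧
         ∀ τ ∈ J p.1, τ (c (p.1+1) - 1) ≠ p.2)) := by
    intro m
    by_cases hm : ∃ n, a m ≤ c (n+1) - 1 ∧ c (n+1) - 1 < a (m+1) ∧ (J n).ncard < s m
    · obtain ⟨n, hn1, hn2, hn3⟩ := hm
      have himg : ((fun τ : ℕ → ℕ => τ (c (n+1) - 1)) '' (J n)).ncard < s m :=
        lt_of_le_of_lt (Set.ncard_image_le (hJf n)) hn3
      have hw : ∃ w, w < s m ∧ w ∉ (fun τ : ℕ → ℕ => τ (c (n+1) - 1)) '' (J n) := by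
        by_contra hco
        push_neg at hco
        have hsub : Set.Iio (s m) ⊆ (fun τ : ℕ → ℕ => τ (c (n+1) - 1)) '' (J n) :=
          fun w hw => hco w hw
        have h5 := Set.ncard_le_ncard hsub ((hJf n).image _)
        have h6 : (Set.Iio (s m)).ncard = s m := by
          rw [Set.ncard_eq_toFinset_card']; simp
        rw [h6] at h5
        exact lt_irrefl _ (lt_of_le_of_lt h5 himg)
      obtain ⟨w, hw1, hw2⟩ := hw
      exact ⟨(n, w), hw1, fun _ => ⟨hn1, hn2, fun τ hτ hτw => hw2 ⟨τ, hτ, hτw⟩⟩⟩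
    · exact ⟨(0, 0), hs m, fun hco => absurd hco hm⟩
  choose p hplt hpspec using dodge
  refine ⟨fun i => (p (Nat.find (hex i))).2, ?_, ?_⟩
  · intro m
    refine ⟨(p m).2, hplt m, ?_⟩
    funext i
    by_cases hi : a m ≤ i ∧ i < a (m+1)
    · simp only [pat, restrIco, if_pos hi]
      rw [bo_eq i m hi.1 hi.2]
    · simp only [pat, restrIco, if_neg hi]
  rw [Filter.frequently_atTop]
  intro M
  obtain ⟨n₀, m, hmge, hb1, hb2, hb3⟩ := H (c (M+1) + 1)
  obtain ⟨hc1, hc2, hc4⟩ := hpspec m ⟨n₀, hb1, hb2, hb3⟩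
  have ham : m ≤ a m := ha.le_apply
  have hnm : M ≤ (p m).1 := by
    have h2 : c (M+1) < c ((p m).1+1) := by omega
    have := hc.lt_iff_lt.mp h2
    omega
  refine ⟨(p m).1, hnm, ?_⟩
  intro hmemJ
  have hcn : c ((p m).1) < c ((p m).1+1) := hc (Nat.lt_succ_self _)
  have histar : c ((p m).1) ≤ c ((p m).1+1) - 1 ∧ c ((p m).1+1) - 1 < c ((p m).1+1) := by
    omega
  have hxval : restrIco (fun i => (p (Nat.find (hex i))).2) (c ((p m).1)) (c ((p m).1+1))
      (c ((p m).1+1) - 1) = (p m).2 := by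
    simp only [restrIco, if_pos histar]
    rw [bo_eq _ m hc1 hc2]
  exact hc4 _ hmemJ hxval

/-- Partition for the set `A`: blocks `[t(2m), t(2m+2))`. -/
def aA (h : ℕ → ℕ) (m : ℕ) : ℕ := tseq h (2*m)

/-- Number of constants on `A`-blocks. -/
def sA (h : ℕ → ℕ) (m : ℕ) : ℕ := h (tseq h (2*m+1)) + 1

/-- Partition for the set `B`: blocks `[t(2m-1), t(2m+1))` (first block `[0, t 1)`). -/
def aB (h : ℕ → ℕ) (m : ℕ) : ℕ := if m = 0 then 0 else tseq h (2*m - 1)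

/-- Number of constants on `B`-blocks. -/
def sB (h : ℕ → ℕ) (m : ℕ) : ℕ := h (tseq h (2*m)) + 1

lemma aA_mono (h : ℕ → ℕ) : StrictMono (aA h) := by
  intro pq q hpq
  exact tseq_mono h (by omega)

lemma aB_succ (h : ℕ → ℕ) (m : ℕ) : aB h (m+1) = tseq h (2*m+1) := by
  have hne : m + 1 ≠ 0 := Nat.succ_ne_zero m
  have h2 : aB h (m+1) = tseq h (2*(m+1) - 1) := if_neg hne
  have e : 2*(m+1) - 1 = 2*m+1 := by omega
  rw [h2, e]

lemma aB_le (h : ℕ → ℕ) (m : ℕ) : aB h m ≤ tseq h (2*m) := by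
  rcases Nat.eq_zero_or_pos m with rfl | hm
  · have : aB h 0 = 0 := if_pos rfl
    omega
  · have h2 : aB h m = tseq h (2*m - 1) := if_neg (by omega)
    rw [h2]
    exact (tseq_mono h).monotone (by omega)

lemma aB_mono (h : ℕ → ℕ) : StrictMono (aB h) := by
  apply strictMono_nat_of_lt_succ
  intro m
  rw [aB_succ]
  rcases Nat.eq_zero_or_pos m with rfl | hm
  · have h2 : aB h 0 = 0 := if_pos rfl
    have h3 : tseq h 0 < tseq h (2*0+1) := tseq_mono h (by omega)
    have h4 : tseq h 0 = 0 := rfl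
    omega
  · have h2 : aB h m = tseq h (2*m - 1) := if_neg (by omega)
    rw [h2]
    exact tseq_mono h (by omega)

lemma nat_div_bound (h : ℕ → ℕ) (h1 : ∀ n, 1 ≤ h n)
    {m e X D : ℕ} (hX : 1 ≤ X) (he : m + 1 ≤ e) (hD : 2 ^ e * X + 1 ≤ D) (hh : D ≤ h D) :
    ((X + 1 : ℕ) : ℝ) / ((h D : ℕ) : ℝ) ≤ (1/2 : ℝ)^m := by
  have key : 2^m * (X + 1) ≤ h D := by
    calc 2^m * (X + 1) ≤ 2^m * (2 * X) := by
          apply Nat.mul_le_mul_left; omega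
      _ = 2^(m+1) * X := by ring
      _ ≤ 2^e * X := by
          apply Nat.mul_le_mul_right
          exact Nat.pow_le_pow_right (by norm_num) he
      _ ≤ D := by omega
      _ ≤ h D := hh
  have hDpos : (0:ℝ) < ((h D : ℕ) : ℝ) := by
    have := h1 D
    exact_mod_cast Nat.lt_of_lt_of_le Nat.zero_lt_one this
  rw [div_le_iff₀ hDpos]
  have h2m : (0:ℝ) < (2:ℝ)^m := by positivity
  have heq : ((1:ℝ)/2)^m * ((h D : ℕ) : ℝ) = ((h D : ℕ) : ℝ) / 2^m := by
    rw [one_div, inv_pow]; ring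
  rw [heq, le_div_iff₀ h2m]
  have hcast : ((X + 1 : ℕ) : ℝ) * (2:ℝ)^m = (((X+1) * 2^m : ℕ) : ℝ) := by push_cast; ring
  rw [hcast]
  have key2 : (X+1) * 2^m ≤ h D := by rw [Nat.mul_comm]; exact key
  exact_mod_cast key2

lemma sumA (h : ℕ → ℕ) (hmono : StrictMono h) (h1 : ∀ n, 1 ≤ h n) :
    Summable (fun m => ((sA h m : ℕ) : ℝ) / ((h (aA h (m+1) - aA h m) : ℕ) : ℝ)) := by
  apply Summable.of_nonneg_of_le (fun m => by positivity) _ summable_geometric_two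
  intro m
  have e1 : tseq h (2*m+1+1) = tseq h (2*m+1) + 2^(2*m+1+2) * h (tseq h (2*m+1)) + 1 :=
    tseq_succ h (2*m+1)
  have e2 : tseq h (2*m) ≤ tseq h (2*m+1) := (tseq_mono h).monotone (by omega)
  have e3 : aA h (m+1) - aA h m = tseq h (2*m+1+1) - tseq h (2*m) := by
    have e : 2*(m+1) = 2*m+1+1 := by omega
    unfold aA
    rw [e]
  have hD : 2^(2*m+1+2) * h (tseq h (2*m+1)) + 1 ≤ aA h (m+1) - aA h m := by
    rw [e3]
    omega
  have hsAeq : sA h m = h (tseq h (2*m+1)) + 1 := rfl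
  rw [hsAeq]
  exact nat_div_bound h h1 (h1 _) (by omega : m + 1 ≤ 2*m+1+2) hD
    (StrictMono.le_apply hmono)

lemma sumB (h : ℕ → ℕ) (hmono : StrictMono h) (h1 : ∀ n, 1 ≤ h n) :
    Summable (fun m => ((sB h m : ℕ) : ℝ) / ((h (aB h (m+1) - aB h m) : ℕ) : ℝ)) := by
  apply Summable.of_nonneg_of_le (fun m => by positivity) _ summable_geometric_two
  intro m
  have e1 : tseq h (2*m+1) = tseq h (2*m) + 2^(2*m+2) * h (tseq h (2*m)) + 1 :=
    tseq_succ h (2*m)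
  have hb1 : aB h (m+1) = tseq h (2*m+1) := aB_succ h m
  have hb0 : aB h m ≤ tseq h (2*m) := aB_le h m
  have hD : 2^(2*m+2) * h (tseq h (2*m)) + 1 ≤ aB h (m+1) - aB h m := by
    rw [hb1]
    omega
  have hsBeq : sB h m = h (tseq h (2*m)) + 1 := rfl
  rw [hsBeq]
  exact nat_div_bound h h1 (h1 _) (by omega : m + 1 ≤ 2*m+2) hD
    (StrictMono.le_apply hmono)

theorem stmt12 (h : ℕ → ℕ) (hmono : StrictMono h) (h1 : ∀ n, 1 ≤ h n) :
    ∃ A B : Set (ℕ → ℕ), fE h A ∧ fE h B ∧ ¬ fE h (A ∪ B) ∧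
      ∀ C : Set (ℕ → ℕ), fE h C → ¬ (A ∪ B ⊆ C) := by
  classical
  set A : Set (ℕ → ℕ) :=
    {x | ∀ᶠ m in Filter.atTop, restrIco x (aA h m) (aA h (m+1)) ∈ Jc (aA h) (sA h) m} with hA
  set B : Set (ℕ → ℕ) :=
    {x | ∀ᶠ m in Filter.atTop, restrIco x (aB h m) (aB h (m+1)) ∈ Jc (aB h) (sB h) m} with hB
  have hfEA : fE h A := fE_of_const h h1 (aA h) (sA h) rfl (aA_mono h) (sumA h hmono h1)
  have hfEB : fE h B := fE_of_const h h1 (aB h) (sB h) (if_pos rfl) (aB_mono h) (sumB h hmono h1)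
  have main : ∀ C : Set (ℕ → ℕ), fE h C → ¬ (A ∪ B ⊆ C) := by
    intro C hC hsub
    obtain ⟨c, hc0, hcm, J, hJs, hJf, hJsum, hCs⟩ := hC
    -- eventually the pattern sets of C are small
    have hterm := hJsum.tendsto_atTop_zero
    have hev : ∀ᶠ n in Filter.atTop, ((J n).ncard : ℝ) / (h (c (n+1) - c n) : ℝ) < 1 :=
      hterm.eventually (gt_mem_nhds one_pos)
    obtain ⟨N, hN⟩ := Filter.eventually_atTop.mp hev
    have hNcard : ∀ n, N ≤ n → (J n).ncard < h (c (n+1) - c n) := by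
      intro n hn
      have hd : (0:ℝ) < (h (c (n+1) - c n) : ℝ) := by
        have := h1 (c (n+1) - c n)
        exact_mod_cast Nat.lt_of_lt_of_le Nat.zero_lt_one this
      have := (div_lt_one hd).mp (hN n hn)
      exact_mod_cast this
    -- least boundary index beyond each C-block
    have hex : ∀ n, ∃ k, c (n+1) ≤ tseq h k := fun n => ⟨c (n+1), (tseq_mono h).le_apply⟩
    set r : ℕ → ℕ := fun n => Nat.find (hex n) with hrdef
    have hr1 : ∀ n, c (n+1) ≤ tseq h (r n) := fun n => Nat.find_spec (hex n)
    have hcge : ∀ n : ℕ, n + 1 ≤ c (n+1) := fun n => hcm.le_apply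
    have hrpos : ∀ n, 1 ≤ r n := by
      intro n
      by_contra hcon
      push_neg at hcon
      have h2 : r n = 0 := by omega
      have h3 := hr1 n
      rw [h2] at h3
      have h4 : tseq h 0 = 0 := rfl
      have := hcge n
      omega
    have hr3 : ∀ n, tseq h (r n - 1) < c (n+1) := by
      intro n
      have hfm := Nat.find_min (hex n) (show r n - 1 < r n from Nat.sub_lt (hrpos n) one_pos)
      omega
    have hrub : ∀ M K : ℕ, ∃ n, K ≤ n ∧ M < r n := by
      intro M K
      refine ⟨max K (tseq h M), le_max_left _ _, ?_⟩
      have h2 : tseq h M < c (max K (tseq h M) + 1) := by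
        have h3 := hcge (max K (tseq h M))
        have h4 : tseq h M ≤ max K (tseq h M) := le_max_right _ _
        omega
      exact (tseq_mono h).lt_iff_lt.mp (lt_of_lt_of_le h2 (hr1 _))
    -- uniform finishing step
    have finish : ∀ (a s : ℕ → ℕ), a 0 = 0 → StrictMono a → (∀ m, 1 ≤ s m) →
        ({x | ∀ᶠ m in Filter.atTop, restrIco x (a m) (a (m+1)) ∈ Jc a s m} ⊆ C) →
        (∀ M, ∃ n m, M ≤ m ∧ a m ≤ c (n+1) - 1 ∧ c (n+1) - 1 < a (m+1) ∧
          (J n).ncard < s m) →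
        False := by
      intro a s ha0 ha hsge hsubC H
      obtain ⟨x, hx1, hx2⟩ := escape a s c ha0 ha hcm hsge J hJf H
      have hxC : x ∈ C := hsubC (Filter.Eventually.of_forall hx1)
      have hevC := hCs hxC
      obtain ⟨n, hn1, hn2⟩ := (hx2.and_eventually hevC).exists
      exact hn1 hn2
    by_cases Podd : ∀ M, ∃ n, N ≤ n ∧ M ≤ r n ∧ r n % 2 = 1
    · -- use A
      apply finish (aA h) (sA h) rfl (aA_mono h) (fun m => Nat.le_add_left 1 _)
        (fun x hx => hsub (Or.inl hx))
      intro M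
      obtain ⟨n, hnN, hnr, hpar⟩ := Podd (2*M+1)
      have hr1n := hr1 n
      have hr3n := hr3 n
      have hcgen := hcge n
      have hmeq : 2 * (r n / 2) = r n - 1 := by omega
      refine ⟨n, r n / 2, by omega, ?_, ?_, ?_⟩
      · show tseq h (2 * (r n / 2)) ≤ c (n+1) - 1
        rw [hmeq]
        omega
      · show c (n+1) - 1 < tseq h (2 * (r n / 2 + 1))
        have e : 2 * (r n / 2 + 1) = r n + 1 := by omega
        rw [e]
        have h6 : tseq h (r n) < tseq h (r n + 1) := tseq_mono h (by omega)
        omega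
      · show (J n).ncard < h (tseq h (2 * (r n / 2) + 1)) + 1
        have e : 2 * (r n / 2) + 1 = r n := by omega
        rw [e]
        have h4 := hNcard n hnN
        have h5 : h (c (n+1) - c n) ≤ h (tseq h (r n)) := hmono.monotone (by omega)
        omega
    · -- use B
      push_neg at Podd
      obtain ⟨M₁, hM₁⟩ := Podd
      have Peven : ∀ M, ∃ n, N ≤ n ∧ M ≤ r n ∧ r n % 2 = 0 := by
        intro M
        obtain ⟨n, hn1, hn2⟩ := hrub (max M M₁) N
        have := hM₁ n hn1 (by omega)
        exact ⟨n, hn1, by omega, by omega⟩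
      apply finish (aB h) (sB h) (if_pos rfl) (aB_mono h) (fun m => Nat.le_add_left 1 _)
        (fun x hx => hsub (Or.inr hx))
      intro M
      obtain ⟨n, hnN, hnr, hpar⟩ := Peven (2*M+2)
      have hr1n := hr1 n
      have hr3n := hr3 n
      have hcgen := hcge n
      have hm1 : 1 ≤ r n / 2 := by omega
      have hmeq : 2 * (r n / 2) = r n := by omega
      refine ⟨n, r n / 2, by omega, ?_, ?_, ?_⟩
      · show aB h (r n / 2) ≤ c (n+1) - 1
        have e : aB h (r n / 2) = tseq h (2 * (r n / 2) - 1) := if_neg (by omega)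
        rw [e, hmeq]
        omega
      · show c (n+1) - 1 < aB h (r n / 2 + 1)
        have e : aB h (r n / 2 + 1) = tseq h (2 * (r n / 2 + 1) - 1) := if_neg (by omega)
        have e2 : 2 * (r n / 2 + 1) - 1 = r n + 1 := by omega
        rw [e, e2]
        have h6 : tseq h (r n) < tseq h (r n + 1) := tseq_mono h (by omega)
        omega
      · show (J n).ncard < h (tseq h (2 * (r n / 2))) + 1
        rw [hmeq]
        have h4 := hNcard n hnN
        have h5 : h (c (n+1) - c n) ≤ h (tseq h (r n)) := hmono.monotone (by omega)
        omega
  exact ⟨A, B, hfEA, hfEB, fun hfe => main _ hfe subset_rfl, main⟩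
end

section
/- A set A ⊆ ω^ω belongs to fN(Fin) if and only if there exists h : ℕ → ℕ with h(n) ≥ 1 for all n and limsup_n h(n) = ∞ such that A ∈ fN(h); that is, fN(Fin) = ⋃ { fN(h) : h : ℕ → ℕ, h(n) ≥ 1 for all n, limsup_n h(n) = ∞ }. -/
open Filter Set

/-!
If `x↾n ∈ S_n` for infinitely many `n`, then for every `K` the cylinders of the sequences in the
`S_n` with `n ≥ K` cover the set, and for `h(n) = 2^(n+1)·|S_n|` they have total weight `2^(-K)`.
Conversely, take covers `(σ^k_i)_i` of weight `< 2^(-k)` and let `S_m` collect all `σ^k_i` of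
length `m`. The combined weights are summable, so each `S_m` is finite; and a cylinder of weight
`< 2^(-k)` must be long once `k` is large, so every point of the set has restrictions in
infinitely many `S_m`.
-/

lemma mem_cylinder_ofFn_restrict (x : ℕ → ℕ) (n : ℕ) :
    x ∈ cylinder (List.ofFn fun i : Fin n => x i) := fun i => by simp

lemma ofFn_restrict_eq_of_mem_cylinder {x : ℕ → ℕ} {σ : List ℕ} (hx : x ∈ cylinder σ) :
    List.ofFn (fun i : Fin σ.length => x i) = σ :=
  List.ext_get (by simp) fun m _ hm => by simpa using hx ⟨m, hm⟩

lemma limsupInfty_of_le {h : ℕ → ℕ} (hh : ∀ n, n ≤ h n) : LimsupInfty h := fun m =>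
  ((eventually_ge_atTop m).mono fun n hn => hn.trans (hh n)).frequently

lemma hasSum_sigma_div_card {β : Type*} {α : β → Type*} (T : ∀ b, Finset (α b))
    (hT : ∀ b, (T b).Nonempty) {g : β → ℝ} {a : ℝ} (hg : HasSum g a) (hg0 : 0 ≤ g) :
    HasSum (fun p : Σ b, T b => g p.1 / (T p.1).card) a := by
  have hfiber : ∀ b, HasSum (fun _ : T b => g b / (T b).card) (g b) := fun b => by
    convert hasSum_fintype (fun _ : T b => g b / (T b).card) using 1
    have : ((T b).card : ℝ) ≠ 0 := by exact_mod_cast (hT b).card_ne_zero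
    simp [field]
  refine hg.sigma_of_hasSum hfiber
    ((summable_sigma_of_nonneg fun p => ?_).2 ⟨fun b => (hfiber b).summable, ?_⟩)
  · exact div_nonneg (hg0 _) (Nat.cast_nonneg _)
  · exact hg.summable.congr fun b => (hfiber b).tsum_eq.symm

lemma exists_seq_cover_of_hasSum {ι : Type*} [Countable ι] [Infinite ι] {h : ℕ → ℕ}
    {F : Set (ℕ → ℕ)} {τ : ι → List ℕ} {a ε : ℝ}
    (hτ : HasSum (fun i => 1 / (h (τ i).length : ℝ)) a) (ha : a < ε)
    (hF : F ⊆ ⋃ i, cylinder (τ i)) :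
    ∃ σ : ℕ → List ℕ, Summable (fun n => 1 / (h (σ n).length : ℝ)) ∧
      ∑' n, 1 / (h (σ n).length : ℝ) < ε ∧ F ⊆ ⋃ n, cylinder (σ n) := by
  obtain ⟨e⟩ := nonempty_equiv_of_countable (α := ℕ) (β := ι)
  have he := e.hasSum_iff.2 hτ
  exact ⟨τ ∘ e, he.summable, he.tsum_eq ▸ ha, hF.trans (e.surjective.iUnion_comp _).ge⟩

-- Nonempty `T n` make the covers built from them infinite, hence indexable by `ℕ`.
lemma fNFin.exists_finset_nonempty {F : Set (ℕ → ℕ)} (hF : fNFin F) :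
    ∃ T : (n : ℕ) → Finset (Fin n → ℕ), (∀ n, (T n).Nonempty) ∧
      F ⊆ {x | ∃ᶠ n in atTop, (fun i : Fin n => x i) ∈ T n} := by
  obtain ⟨S, hS, hFS⟩ := hF
  refine ⟨fun n => insert 0 (hS n).toFinset, fun n => Finset.insert_nonempty _ _, hFS.trans ?_⟩
  exact fun x hx => hx.mono fun n hn => Finset.mem_insert_of_mem ((hS n).mem_toFinset.2 hn)

lemma fN_of_frequently_mem (T : (n : ℕ) → Finset (Fin n → ℕ)) (hT : ∀ n, (T n).Nonempty)
    {F : Set (ℕ → ℕ)} (hF : F ⊆ {x | ∃ᶠ n in atTop, (fun i : Fin n => x i) ∈ T n}) :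
    fN (fun n => 2 ^ (n + 1) * (T n).card) F := by
  intro ε hε
  obtain ⟨K, hK⟩ := exists_pow_lt_of_lt_one hε one_half_lt_one
  have : Infinite (Σ n, T (n + K)) :=
    Infinite.of_injective (fun n => ⟨n, (hT (n + K)).to_subtype.some⟩)
      fun _ _ hmn => congrArg Sigma.fst hmn
  refine exists_seq_cover_of_hasSum (h := fun n => 2 ^ (n + 1) * (T n).card)
    (τ := fun p : Σ n, T (n + K) => List.ofFn p.2.1) ?_ hK ?_
  · convert hasSum_sigma_div_card (fun n : ℕ => T (n + K)) (fun n => hT (n + K))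
      (hasSum_geometric_two' ((1 / 2) ^ K)) (fun n => by positivity) using 2 with p
    rw [List.length_ofFn]
    push_cast
    rw [one_div_pow, pow_succ, pow_add]
    field_simp
  · intro x hx
    obtain ⟨m, hKm, hm⟩ := frequently_atTop.1 (hF hx) K
    obtain ⟨n, rfl⟩ := Nat.exists_eq_add_of_le' hKm
    exact mem_iUnion.2 ⟨⟨n, _, hm⟩, mem_cylinder_ofFn_restrict x _⟩

lemma finite_setOf_length_eq_of_summable {ι : Type*} {h : ℕ → ℕ} (hpos : ∀ n, 1 ≤ h n)
    {σ : ι → List ℕ} (hσ : Summable fun i => 1 / (h (σ i).length : ℝ)) (m : ℕ) :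
    {i | (σ i).length = m}.Finite := by
  refine Set.finite_coe_iff.1 (Finite.of_summable_const (b := 1 / (h m : ℝ)) ?_ ?_)
  · exact one_div_pos.2 (Nat.cast_pos.2 (hpos m))
  · exact (hσ.subtype _).congr fun i => congrArg (fun l => 1 / (h l : ℝ)) i.2

lemma exists_pos_forall_one_div_lt_imp_le {h : ℕ → ℕ} (hpos : ∀ n, 1 ≤ h n) (M : ℕ) :
    ∃ δ > 0, ∀ m, 1 / (h m : ℝ) < δ → M ≤ m := by
  refine ⟨1 / ((Finset.range M).sup h + 1 : ℕ), by positivity, fun m hm => ?_⟩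
  by_contra! hmM
  have hle : h m ≤ (Finset.range M).sup h + 1 :=
    Nat.le_succ_of_le (Finset.le_sup (Finset.mem_range.2 hmM))
  exact hm.not_ge (one_div_le_one_div_of_le (Nat.cast_pos.2 (hpos m)) (by exact_mod_cast hle))

lemma fNFin_of_fN {h : ℕ → ℕ} (hpos : ∀ n, 1 ≤ h n) {F : Set (ℕ → ℕ)} (hF : fN h F) :
    fNFin F := by
  choose σ hsum hlt hcov using fun k : ℕ => hF ((1 / 2) ^ k) (by positivity)
  set τ : ℕ × ℕ → List ℕ := fun p => σ p.1 p.2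
  have hτ : Summable fun p => 1 / (h (τ p).length : ℝ) :=
    (summable_prod_of_nonneg fun _ => by positivity).2 ⟨hsum, summable_geometric_two.of_nonneg_of_le
      (fun _ => tsum_nonneg fun _ => by positivity) fun k => (hlt k).le⟩
  refine ⟨fun m => List.ofFn ⁻¹' (τ '' {p | (τ p).length = m}),
    fun m => ((finite_setOf_length_eq_of_summable hpos hτ m).image τ).preimage
      List.ofFn_injective.injOn, fun x hx => frequently_atTop.2 fun M => ?_⟩
  obtain ⟨δ, hδ, hδM⟩ := exists_pos_forall_one_div_lt_imp_le hpos M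
  obtain ⟨k, hk⟩ := exists_pow_lt_of_lt_one hδ one_half_lt_one
  obtain ⟨n, hxn⟩ := mem_iUnion.1 (hcov k hx)
  have hlong : 1 / (h (σ k n).length : ℝ) < δ :=
    ((hsum k).le_tsum n fun _ _ => by positivity).trans_lt ((hlt k).trans hk)
  exact ⟨_, hδM _ hlong, (k, n), rfl, (ofFn_restrict_eq_of_mem_cylinder hxn).symm⟩

theorem stmt13 (A : Set (ℕ → ℕ)) :
    fNFin A ↔ ∃ h : ℕ → ℕ, (∀ n, 1 ≤ h n) ∧ LimsupInfty h ∧ fN h A := by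
  constructor
  · intro hA
    obtain ⟨T, hT, hAT⟩ := hA.exists_finset_nonempty
    have hcard : ∀ n, 0 < (T n).card := fun n => Finset.card_pos.2 (hT n)
    refine ⟨fun n => 2 ^ (n + 1) * (T n).card, fun n => Nat.mul_pos (by positivity) (hcard n),
      limsupInfty_of_le fun n => ?_, fN_of_frequently_mem T hT hAT⟩
    calc n ≤ 2 ^ (n + 1) := Nat.lt_two_pow_self.le.trans (Nat.pow_le_pow_right two_pos n.le_succ)
      _ ≤ 2 ^ (n + 1) * (T n).card := Nat.le_mul_of_pos_right _ (hcard n)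
  · rintro ⟨h, hpos, -, hfN⟩
    exact fNFin_of_fN hpos hfN
end

section
/- The set A = {x ∈ ω^ω : x(n) = 0 for infinitely many n} belongs to fS(Fin), but A ∉ fS(h) for every h : ℕ → ℕ with h(n) ≥ 1 for all n and limsup_n h(n) = ∞; in particular, ⋃_h fS(h) is a proper subfamily of fS(Fin). -/
open Filter Set

theorem stmt14 :
    fSFin {x : ℕ → ℕ | ∃ᶠ n in Filter.atTop, x n = 0} ∧
    (∀ h : ℕ → ℕ, (∀ n, 1 ≤ h n) → LimsupInfty h →
      ¬ fS h {x : ℕ → ℕ | ∃ᶠ n in Filter.atTop, x n = 0}) := by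
  constructor
  · -- A ∈ fS(Fin): unit intervals, J n = {0}
    refine ⟨id, rfl, strictMono_id, fun _ => {fun _ => 0}, ?_, fun n => Set.finite_singleton _, ?_⟩
    · intro n σ hσ i _
      simp only [Set.mem_singleton_iff] at hσ
      simp [hσ]
    · intro x hx
      refine hx.mono fun n hn => ?_
      simp only [Set.mem_singleton_iff]
      funext i
      simp only [restrIco, id]
      split_ifs with hi
      · have : i = n := by omega
        rw [this, hn]
      · rfl
  · rintro h h1 _ ⟨a, ha0, hmono, J, hsupp, hfin, hsum, hsub⟩
    -- interval endpoints satisfy a n < a (n+1)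
    have hlt : ∀ n, a n < a (n+1) := fun n => hmono (Nat.lt_succ_self n)
    by_cases hL : ∃ᶠ n in Filter.atTop, 2 ≤ a (n+1) - a n
    · -- infinitely many intervals of length ≥ 2: build x ∈ A avoiding all J n
      set p : ℕ → ℕ := fun n => a (n+1) - 1 with hp
      have hpmem : ∀ n, a n ≤ p n ∧ p n < a (n+1) := fun n => by
        have := hlt n; constructor <;> simp only [hp] <;> omega
      have hpinj : Function.Injective p := by
        intro m n hmn
        by_contra hne
        rcases Nat.lt_or_ge m n with hc | hc
        · have := hmono.monotone (show m + 1 ≤ n from hc)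
          have := hpmem m; have := hpmem n; simp only [hp] at hmn; omega
        · have hc' : n < m := lt_of_le_of_ne hc (Ne.symm hne)
          have := hmono.monotone (show n + 1 ≤ m from hc')
          have := hpmem m; have := hpmem n; simp only [hp] at hmn; omega
      -- choose values k n so that the pattern with value k n at p n is not in J n
      have hchoice : ∀ n, ∃ k : ℕ, (fun i => if i = p n then k else 0) ∉ J n := by
        intro n
        have himg : ((fun g : ℕ → ℕ => g (p n)) '' (J n)).Finite := (hfin n).image _
        obtain ⟨k, hk⟩ := himg.exists_notMem
        exact ⟨k, fun hmem => hk ⟨_, hmem, by simp⟩⟩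
      choose k hk using hchoice
      classical
      set x : ℕ → ℕ := fun i => if hi : ∃ m, p m = i then k hi.choose else 0 with hxdef
      -- x vanishes off the points p m
      have hx0 : ∀ i, (∀ m, p m ≠ i) → x i = 0 := by
        intro i hi
        simp only [hxdef]
        rw [dif_neg]
        rintro ⟨m, hm⟩; exact hi m hm
      have hxp : ∀ n, x (p n) = k n := by
        intro n
        simp only [hxdef]
        rw [dif_pos ⟨n, rfl⟩]
        congr 1
        exact hpinj (⟨n, rfl⟩ : ∃ m, p m = p n).choose_spec
      -- intervals are pairwise disjoint
      have hdisj : ∀ {m n i}, a m ≤ i → i < a (m+1) → a n ≤ i → i < a (n+1) → m = n := by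
        intro m n i h1' h2' h3' h4'
        by_contra hne
        rcases Nat.lt_or_ge m n with hc | hc
        · have := hmono.monotone (show m + 1 ≤ n from hc); omega
        · have hc' : n < m := lt_of_le_of_ne hc (Ne.symm hne)
          have := hmono.monotone (show n + 1 ≤ m from hc'); omega
      -- the restriction of x to I_n is exactly the chosen pattern
      have hrestr : ∀ n, restrIco x (a n) (a (n+1)) = fun i => if i = p n then k n else 0 := by
        intro n
        funext i
        simp only [restrIco]
        split_ifs with hi hip hip
        · rw [hip, hxp]
        · refine hx0 i fun m hm => hip ?_
          have := hpmem m
          have : m = n := hdisj (hm ▸ this.1) (hm ▸ this.2) hi.1 hi.2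
          exact (this ▸ hm).symm
        · exact absurd ((hip ▸ hpmem n) : a n ≤ i ∧ i < a (n+1)) (by tauto)
        · rfl
      -- x never matches J n
      have hnever : ∀ n, restrIco x (a n) (a (n+1)) ∉ J n := by
        intro n; rw [hrestr n]; exact hk n
      -- but x ∈ A : x (a n) = 0 whenever the n-th interval has length ≥ 2
      have hxA : ∃ᶠ j in Filter.atTop, x j = 0 := by
        rw [Filter.frequently_atTop] at hL ⊢
        intro N
        obtain ⟨n, hnN, hn2⟩ := hL N
        refine ⟨a n, le_trans hnN (le_trans (hmono.le_apply) le_rfl), ?_⟩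
        refine hx0 (a n) fun m hm => ?_
        have hm1 := hpmem m
        have heq : m = n := hdisj (hm ▸ hm1.1) (hm ▸ hm1.2) le_rfl (hlt n)
        subst heq
        simp only [hp] at hm
        omega
      have := hsub hxA
      simp only [Set.mem_setOf_eq] at this
      obtain ⟨n, hn⟩ := this.exists
      exact hnever n hn
    · -- eventually intervals have length 1: J n must be eventually empty
      rw [Filter.not_frequently] at hL
      have hlen1 : ∀ᶠ n in Filter.atTop, a (n+1) - a n = 1 := by
        refine hL.mono fun n hn => ?_
        have := hlt n; omega
      have hh1 : (0:ℝ) < (h 1 : ℝ) := by exact_mod_cast Nat.lt_of_lt_of_le Nat.zero_lt_one (h1 1)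
      have htend := hsum.tendsto_atTop_zero
      have hsmall : ∀ᶠ n in Filter.atTop,
          ((J n).ncard : ℝ) / (h (a (n+1) - a n) : ℝ) < 1 / (h 1 : ℝ) := by
        have : (0:ℝ) < 1 / (h 1 : ℝ) := by positivity
        exact htend.eventually (gt_mem_nhds this)
      have hempty : ∀ᶠ n in Filter.atTop, J n = ∅ := by
        filter_upwards [hlen1, hsmall] with n hn1 hns
        rw [hn1] at hns
        have : ((J n).ncard : ℝ) < 1 := by
          rwa [div_lt_div_iff_of_pos_right hh1] at hns
        have hnc : (J n).ncard = 0 := by exact_mod_cast Nat.lt_one_iff.mp (by exact_mod_cast this)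
        exact ((Set.ncard_eq_zero (hfin n)).mp hnc)
      have hxA : (fun _ => 0 : ℕ → ℕ) ∈ {x : ℕ → ℕ | ∃ᶠ n in Filter.atTop, x n = 0} :=
        Filter.Frequently.of_forall fun _ => rfl
      have := (hsub hxA).and_eventually hempty
      obtain ⟨n, hn, hemp⟩ := this.exists
      rw [hemp] at hn
      exact hn
end

section
/- Let f, g : ℕ → ℕ satisfy f(n) ≥ 1 and g(n) ≥ 1 for all n, limsup_n f(n) = ∞, limsup_n g(n) = ∞, and lim_{n→∞} f(n)/g(n) = 0. Then fN(f) ⊊ fN(g), i.e., fN(f) ⊆ fN(g) and there exists F ∈ fN(g) with F ∉ fN(f). -/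
open Filter Set

/-! For the inclusion, `f/g → 0` with `g ≥ 1` gives `f ≤ C g` pointwise, so `1/g ≤ C/f`
termwise. For strictness, choose `b i` (powers of two) so that `B n = ∏_{i<n} b i` lies between
`max_{k≤n} f k / c` and `2 max_{k≤n} f k`, and let `F = ∏_i [0, b i)`. The uniform product measure
on `F` gives a cylinder of length `n` mass at most `1/B n ≤ c/f n`, so every cover of `F` by
cylinders has `∑ 1/f(|σ|) ≥ 1/c` and `F ∉ fN(f)`. On the other hand, at a record value `L` of `g`,
`B L ≤ 2 max_{k≤L} f k` is small compared with `g L`, so `F` is covered by its `B L` cylinders of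
length `L` at cost `B L / g L`, and the cover is padded to a sequence by long cylinders of
summable cost. -/

open scoped ENNReal

lemma isLittleO_of_tendsto_div {f g : ℕ → ℕ} (hg : ∀ n, 0 < g n)
    (hfg : Tendsto (fun n => (f n : ℝ) / g n) atTop (nhds 0)) :
    (fun n => (f n : ℝ)) =o[atTop] fun n => (g n : ℝ) :=
  (Asymptotics.isLittleO_iff_tendsto fun n h => absurd h (Nat.cast_pos.2 (hg n)).ne').2 hfg

lemma exists_le_mul_of_tendsto_div {f g : ℕ → ℕ} (hg : ∀ n, 0 < g n)
    (hfg : Tendsto (fun n => (f n : ℝ) / g n) atTop (nhds 0)) :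
    ∃ C : ℝ, ∀ n, (f n : ℝ) ≤ C * g n := by
  obtain ⟨C, hC⟩ := (Asymptotics.isBigO_nat_atTop_iff fun n h =>
    absurd h (Nat.cast_pos.2 (hg n)).ne').1 (isLittleO_of_tendsto_div hg hfg).isBigO
  exact ⟨C, fun n => by simpa using hC n⟩

lemma fN.mono_of_le_mul {f g : ℕ → ℕ} {C : ℝ} (hf : ∀ n, 0 < f n)
    (hfg : ∀ n, (f n : ℝ) ≤ C * g n) {F : Set (ℕ → ℕ)} (hF : fN f F) : fN g F := by
  have hC : 0 < C := by
    have := (Nat.cast_pos.2 (hf 0)).trans_le (hfg 0)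
    exact pos_of_mul_pos_left this (Nat.cast_nonneg _)
  have hterm : ∀ m, (1 : ℝ) / g m ≤ C * (1 / f m) := by
    intro m
    rcases (g m).eq_zero_or_pos with h0 | h0
    · rw [h0, Nat.cast_zero, div_zero]
      positivity
    · rw [mul_one_div, div_le_div_iff₀ (Nat.cast_pos.2 h0) (Nat.cast_pos.2 (hf m)), one_mul]
      exact hfg m
  intro ε hε
  obtain ⟨σ, hsum, hlt, hcov⟩ := hF (ε / C) (div_pos hε hC)
  have hsumC := hsum.mul_left C
  have hsumg : Summable fun n => (1 : ℝ) / g (σ n).length :=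
    hsumC.of_nonneg_of_le (fun n => by positivity) fun n => hterm _
  refine ⟨σ, hsumg, ?_, hcov⟩
  calc ∑' n, (1 : ℝ) / g (σ n).length ≤ ∑' n, C * (1 / f (σ n).length) :=
        hsumg.tsum_le_tsum (fun n => hterm _) hsumC
    _ = C * ∑' n, (1 : ℝ) / f (σ n).length := tsum_mul_left
    _ < C * (ε / C) := mul_lt_mul_of_pos_left hlt hC
    _ = ε := mul_div_cancel₀ _ hC.ne'

lemma LimsupInfty.exists_le_forall_le {g : ℕ → ℕ} (hg : LimsupInfty g) (v : ℕ) :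
    ∃ L, v ≤ g L ∧ ∀ k ≤ L, g k ≤ g L := by
  classical
  have hex : ∃ L, v ≤ g L := (hg v).exists
  refine ⟨Nat.find hex, Nat.find_spec hex, fun k hk => ?_⟩
  rcases hk.lt_or_eq with hk | rfl
  · exact (not_le.1 (Nat.find_min hex hk)).le.trans (Nat.find_spec hex)
  · rfl

lemma exists_forall_le_mul_of_tendsto_div {f g : ℕ → ℕ} (hg : ∀ n, 0 < g n)
    (hglim : LimsupInfty g) (hfg : Tendsto (fun n => (f n : ℝ) / g n) atTop (nhds 0))
    {ε : ℝ} (hε : 0 < ε) :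
    ∃ L, ∀ k ≤ L, (f k : ℝ) ≤ ε * g L := by
  obtain ⟨N, hN⟩ := ((isLittleO_of_tendsto_div hg hfg).def hε).exists_forall_of_atTop
  -- a record value of `g` beyond every `g k`, `k ≤ N`, which also dominates `f` on `[0, N]`
  obtain ⟨L, hvL, hrec⟩ :=
    hglim.exists_le_forall_le (max ⌈(partialSups f N : ℝ) / ε⌉₊ (partialSups g N + 1))
  refine ⟨L, fun k hk => ?_⟩
  rcases le_or_gt k N with hkN | hNk
  · calc (f k : ℝ) ≤ partialSups f N := by exact_mod_cast le_partialSups_of_le f hkN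
      _ ≤ ε * g L := by
        rw [← div_le_iff₀' hε]
        exact (Nat.le_ceil _).trans (by exact_mod_cast (le_max_left _ _).trans hvL)
  · have hgk : (g k : ℝ) ≤ g L := by exact_mod_cast hrec k hk
    calc (f k : ℝ) ≤ ε * g k := by simpa using hN k hNk.le
      _ ≤ ε * g L := by gcongr

lemma Nat.pow_clog_two_le_two_mul {m : ℕ} (hm : 0 < m) : 2 ^ Nat.clog 2 m ≤ 2 * m := by
  rcases (Nat.succ_le_of_lt hm).eq_or_lt with rfl | hm
  · simp
  · have := Nat.pow_pred_clog_lt_self one_lt_two hm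
    rw [← Nat.succ_pred_eq_of_pos (Nat.clog_pos one_lt_two hm), pow_succ]
    omega

lemma Monotone.exists_prod_range_le_two_mul {φ : ℕ → ℕ} (hφ : Monotone φ) (hφ0 : ∀ n, 0 < φ n) :
    ∃ b : ℕ → ℕ, (∀ i, 0 < b i) ∧ ∃ c : ℕ, ∀ n,
      φ n ≤ c * ∏ i ∈ Finset.range n, b i ∧ ∏ i ∈ Finset.range n, b i ≤ 2 * φ n := by
  set E := fun n => Nat.clog 2 (φ n)
  have hE : Monotone E := (Nat.clog_monotone 2).comp hφ
  refine ⟨fun i => 2 ^ (E (i + 1) - E i), fun i => by positivity, 2 ^ E 0, fun n => ?_⟩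
  rw [Finset.prod_pow_eq_pow_sum, Finset.sum_range_tsub hE, ← pow_add,
    Nat.add_sub_cancel' (hE n.zero_le)]
  exact ⟨Nat.le_pow_clog one_lt_two _,
    (Nat.pow_le_pow_right two_pos (Nat.sub_le _ _)).trans (Nat.pow_clog_two_le_two_mul (hφ0 n))⟩

lemma LimsupInfty.exists_summable_tsum_lt {h : ℕ → ℕ} (hh : LimsupInfty h) {ε : ℝ} (hε : 0 < ε) :
    ∃ ℓ : ℕ → ℕ, Summable (fun k => (1 : ℝ) / h (ℓ k)) ∧ ∑' k, (1 : ℝ) / h (ℓ k) < ε := by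
  choose ℓ hℓ using fun k : ℕ => (hh ⌈4 * 2 ^ k / ε⌉₊).exists
  have hbound : ∀ k, (1 : ℝ) / h (ℓ k) ≤ ε / 4 * (1 / 2) ^ k := by
    intro k
    have hpos : (0 : ℝ) < 4 * 2 ^ k / ε := by positivity
    calc (1 : ℝ) / h (ℓ k) ≤ 1 / (4 * 2 ^ k / ε) :=
          one_div_le_one_div_of_le hpos ((Nat.le_ceil _).trans (by exact_mod_cast hℓ k))
      _ = ε / 4 * (1 / 2) ^ k := by rw [one_div_pow]; field_simp
  have hgeom : Summable fun k : ℕ => ε / 4 * (1 / 2 : ℝ) ^ k :=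
    summable_geometric_two.mul_left _
  have hsumm : Summable fun k => (1 : ℝ) / h (ℓ k) :=
    hgeom.of_nonneg_of_le (fun k => by positivity) hbound
  refine ⟨ℓ, hsumm, ?_⟩
  calc ∑' k, (1 : ℝ) / h (ℓ k) ≤ ∑' k : ℕ, ε / 4 * (1 / 2 : ℝ) ^ k :=
        hsumm.tsum_le_tsum hbound hgeom
    _ = ε / 2 := by rw [tsum_mul_left, tsum_geometric_two]; ring
    _ < ε := half_lt_self hε

lemma fN_of_forall_finset_cover {h : ℕ → ℕ} {F : Set (ℕ → ℕ)} (hh : LimsupInfty h)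
    (hF : ∀ ε > 0, ∃ s : Finset (List ℕ),
      ∑ τ ∈ s, (1 : ℝ) / h τ.length < ε ∧ F ⊆ ⋃ τ ∈ s, cylinder τ) :
    fN h F := by
  intro ε hε
  obtain ⟨s, hs, hcov⟩ := hF (ε / 2) (half_pos hε)
  obtain ⟨ℓ, hℓs, hℓ⟩ := hh.exists_summable_tsum_lt (half_pos hε)
  set K := s.card
  let e : Fin K ≃ s := s.equivFin.symm
  let σ : ℕ → List ℕ := fun n =>
    if hn : n < K then e ⟨n, hn⟩ else List.replicate (ℓ (n - K)) 0
  have htail : (fun k => (1 : ℝ) / h (σ (k + K)).length) = fun k => (1 : ℝ) / h (ℓ k) := by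
    funext k
    simp [σ]
  have hsumm : Summable fun n => (1 : ℝ) / h (σ n).length :=
    (summable_nat_add_iff K).1 (htail ▸ hℓs)
  have hhead :
      ∑ n ∈ Finset.range K, (1 : ℝ) / h (σ n).length = ∑ τ ∈ s, (1 : ℝ) / h τ.length := by
    rw [Finset.sum_range, ← Finset.sum_coe_sort s, ← e.sum_comp]
    simp [σ]
  refine ⟨σ, hsumm, ?_, ?_⟩
  · rw [← hsumm.sum_add_tsum_nat_add K, hhead, htail]
    linarith
  · intro x hx
    obtain ⟨τ, hτ, hxτ⟩ := mem_iUnion₂.1 (hcov hx)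
    refine mem_iUnion.2 ⟨e.symm ⟨τ, hτ⟩, ?_⟩
    simpa [σ] using hxτ

lemma fN_pi_Iio {h b : ℕ → ℕ} (hh : LimsupInfty h)
    (hsmall : ∀ δ > 0, ∃ L, ∏ i ∈ Finset.range L, (b i : ℝ) ≤ δ * h L) :
    fN h (pi univ fun i => Iio (b i)) := by
  refine fN_of_forall_finset_cover hh fun ε hε => ?_
  obtain ⟨L, hL⟩ := hsmall (ε / 2) (half_pos hε)
  let s : Finset (List ℕ) :=
    (Fintype.piFinset fun i : Fin L => Finset.range (b i)).image List.ofFn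
  have hcard : (s.card : ℝ) ≤ ∏ i ∈ Finset.range L, (b i : ℝ) := by
    rw [← Fin.prod_univ_eq_prod_range (fun i => (b i : ℝ))]
    exact_mod_cast Finset.card_image_le.trans (by simp)
  refine ⟨s, ?_, fun x hx => ?_⟩
  · have hlen : ∀ τ ∈ s, τ.length = L := by simp [s]
    rw [Finset.sum_congr rfl fun τ hτ => by rw [hlen τ hτ], Finset.sum_const, nsmul_eq_mul]
    calc (s.card : ℝ) * (1 / h L) ≤ (∏ i ∈ Finset.range L, (b i : ℝ)) / h L := by
          rw [mul_one_div]; gcongr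
      _ ≤ ε / 2 := div_le_of_le_mul₀ (by positivity) (by positivity) hL
      _ < ε := half_lt_self hε
  · refine mem_iUnion₂.2 ⟨List.ofFn fun i : Fin L => x i, ?_, ?_⟩
    · exact Finset.mem_image_of_mem _
        (Fintype.mem_piFinset.2 fun i => Finset.mem_range.2 (hx i trivial))
    · simp [cylinder]

lemma cylinder_eq_pi (σ : List ℕ) :
    cylinder σ = (Finset.range σ.length : Set ℕ).pi fun i => {σ.getD i 0} := by
  ext x
  simp +contextual [cylinder, Fin.forall_iff]

noncomputable def boxMeasure (b : ℕ → ℕ) (hb : ∀ i, 0 < b i) : MeasureTheory.Measure (ℕ → ℕ) :=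
  .infinitePi fun i =>
    (PMF.uniformOfFinset (Finset.range (b i)) (Finset.nonempty_range_iff.2 (hb i).ne')).toMeasure

section boxMeasure

variable {b : ℕ → ℕ} (hb : ∀ i, 0 < b i)

lemma boxMeasure_pi_Iio : boxMeasure b hb (pi univ fun i => Iio (b i)) = 1 := by
  rw [boxMeasure, MeasureTheory.Measure.infinitePi_pi_univ _ fun _ => measurableSet_Iio]
  refine (tprod_congr fun i => (PMF.toMeasure_apply_eq_one_iff _ measurableSet_Iio).2 ?_).trans
    tprod_one
  simp

lemma boxMeasure_cylinder_le (σ : List ℕ) :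
    boxMeasure b hb (cylinder σ) ≤ ((∏ i ∈ Finset.range σ.length, b i : ℕ) : ℝ≥0∞)⁻¹ := by
  rw [cylinder_eq_pi, boxMeasure,
    MeasureTheory.Measure.infinitePi_pi _ fun _ _ => measurableSet_singleton _, Nat.cast_prod,
    ENNReal.prod_inv_distrib fun _ _ _ _ _ => .inr (ENNReal.natCast_ne_top _)]
  refine Finset.prod_le_prod' fun i _ => ?_
  rw [PMF.toMeasure_apply_singleton _ _ (measurableSet_singleton _), PMF.uniformOfFinset_apply,
    Finset.card_range]
  split_ifs <;> simp

end boxMeasure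

lemma not_fN_pi_Iio {f b : ℕ → ℕ} (hf : ∀ n, 0 < f n) (hb : ∀ i, 0 < b i) {C : ℝ}
    (hfb : ∀ n, (f n : ℝ) ≤ C * ∏ i ∈ Finset.range n, (b i : ℝ)) :
    ¬ fN f (pi univ fun i => Iio (b i)) := by
  intro hF
  have hC : 0 < C := by
    simpa using (Nat.cast_pos.2 (hf 0)).trans_le (hfb 0)
  obtain ⟨σ, hsum, hlt, hcov⟩ := hF C⁻¹ (inv_pos.2 hC)
  have hterm : ∀ n, boxMeasure b hb (cylinder (σ n)) ≤
      ENNReal.ofReal (C * (1 / f (σ n).length)) := by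
    intro n
    have hB : (0 : ℝ) < ∏ i ∈ Finset.range (σ n).length, (b i : ℝ) :=
      Finset.prod_pos fun i _ => Nat.cast_pos.2 (hb i)
    refine (boxMeasure_cylinder_le hb _).trans ?_
    rw [← ENNReal.ofReal_natCast, Nat.cast_prod, ← ENNReal.ofReal_inv_of_pos hB]
    refine ENNReal.ofReal_le_ofReal ?_
    rw [mul_one_div, le_div_iff₀ (Nat.cast_pos.2 (hf _)), inv_mul_le_iff₀ hB, mul_comm]
    exact hfb _
  have hcover : (1 : ℝ≥0∞) ≤ ENNReal.ofReal (C * ∑' n, 1 / (f (σ n).length : ℝ)) :=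
    calc (1 : ℝ≥0∞) = boxMeasure b hb (pi univ fun i => Iio (b i)) := (boxMeasure_pi_Iio hb).symm
      _ ≤ boxMeasure b hb (⋃ n, cylinder (σ n)) := MeasureTheory.measure_mono hcov
      _ ≤ ∑' n, boxMeasure b hb (cylinder (σ n)) := MeasureTheory.measure_iUnion_le _
      _ ≤ ∑' n, ENNReal.ofReal (C * (1 / f (σ n).length)) := ENNReal.tsum_le_tsum hterm
      _ = ENNReal.ofReal (C * ∑' n, 1 / (f (σ n).length : ℝ)) := by
        rw [← ENNReal.ofReal_tsum_of_nonneg (fun n => by positivity) (hsum.mul_left C),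
          tsum_mul_left]
  refine hcover.not_gt (ENNReal.ofReal_lt_one.2 ?_)
  calc C * ∑' n, 1 / (f (σ n).length : ℝ) < C * C⁻¹ := mul_lt_mul_of_pos_left hlt hC
    _ = 1 := mul_inv_cancel₀ hC.ne'

theorem stmt16_general (f g : ℕ → ℕ) (hf1 : ∀ n, 1 ≤ f n) (hg1 : ∀ n, 1 ≤ g n)
    (hglim : LimsupInfty g)
    (hratio : Filter.Tendsto (fun n => (f n : ℝ) / (g n : ℝ)) Filter.atTop (nhds 0)) :
    (∀ F : Set (ℕ → ℕ), fN f F → fN g F) ∧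
    (∃ F : Set (ℕ → ℕ), fN g F ∧ ¬ fN f F) := by
  obtain ⟨C, hC⟩ := exists_le_mul_of_tendsto_div hg1 hratio
  refine ⟨fun F => fN.mono_of_le_mul hf1 hC, ?_⟩
  obtain ⟨b, hb, c, hbφ⟩ := (partialSups_monotone f).exists_prod_range_le_two_mul
    fun n => (hf1 0).trans (le_partialSups_of_le f n.zero_le)
  refine ⟨pi univ fun i => Iio (b i), fN_pi_Iio hglim fun δ hδ => ?_,
    not_fN_pi_Iio hf1 hb (C := c) fun n => ?_⟩
  · obtain ⟨L, hL⟩ := exists_forall_le_mul_of_tendsto_div hg1 hglim hratio (half_pos hδ)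
    obtain ⟨k, hk, hφk⟩ := exists_partialSups_eq f L
    refine ⟨L, ?_⟩
    calc ∏ i ∈ Finset.range L, (b i : ℝ) ≤ 2 * f k := by
          exact_mod_cast hφk ▸ (hbφ L).2
      _ ≤ 2 * (δ / 2 * g L) := by gcongr; exact hL k hk
      _ = δ * g L := by ring
  · exact_mod_cast (le_partialSups f n).trans (hbφ n).1

theorem stmt16 (f g : ℕ → ℕ) (hf1 : ∀ n, 1 ≤ f n) (hg1 : ∀ n, 1 ≤ g n)
    (hflim : LimsupInfty f) (hglim : LimsupInfty g)
    (hratio : Filter.Tendsto (fun n => (f n : ℝ) / (g n : ℝ)) Filter.atTop (nhds 0)) :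
    (∀ F : Set (ℕ → ℕ), fN f F → fN g F) ∧
    (∃ F : Set (ℕ → ℕ), fN g F ∧ ¬ fN f F) :=
  stmt16_general f g hf1 hg1 hglim hratio
end

section
/- Let h : ℕ → ℕ satisfy h(n) ≥ 1 for all n and limsup_n h(n) = ∞. Then fS(h) is orthogonal to M_-: there exist A ∈ fS(h) and B ∈ M_- with A ∪ B = ω^ω. -/
open Filter Set

theorem stmt18 (h : ℕ → ℕ) (h1 : ∀ n, 1 ≤ h n) (hlim : LimsupInfty h) :
    ∃ A B : Set (ℕ → ℕ), fS h A ∧ Mminus B ∧ A ∪ B = Set.univ := by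

  have hl : ∀ k : ℕ, ∃ n : ℕ, 1 ≤ n ∧ 2^k ≤ h n := by
    intro k
    exact ((hlim (2^k)).and_eventually (eventually_ge_atTop 1)).exists.imp
      (fun n hn => ⟨hn.2, hn.1⟩)
  choose ℓ hl1 hl2 using hl
  set a : ℕ → ℕ := fun n => ∑ i ∈ Finset.range n, ℓ i with ha
  have ha0 : a 0 = 0 := by simp [ha]
  have hamono : StrictMono a := strictMono_nat_of_lt_succ (fun n => by
    have := hl1 n
    simp only [ha, Finset.sum_range_succ]
    omega)
  have hdiff : ∀ n, a (n+1) - a n = ℓ n := by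
    intro n; simp [ha, Finset.sum_range_succ]
  set J : ℕ → Set (ℕ → ℕ) := fun _ => {fun _ => 0} with hJ
  refine ⟨{x | ∃ᶠ n in atTop, restrIco x (a n) (a (n+1)) ∈ J n},
    {x | ∀ᶠ n in atTop, ∃ i, a n ≤ i ∧ i < a (n+1) ∧ x i ≠ 0}, ?_, ?_, ?_⟩
  · refine ⟨a, ha0, hamono, J, ?_, ?_, ?_, subset_rfl⟩
    · intro n σ hσ i _
      simp only [hJ, Set.mem_singleton_iff] at hσ
      simp [hσ]
    · intro n; simp [hJ]
    · apply Summable.of_nonneg_of_le (fun n => by positivity)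
        (fun n => ?_) summable_geometric_two
      rw [hdiff]
      have h2 : (2:ℝ)^n ≤ (h (ℓ n) : ℝ) := by
        exact_mod_cast (hl2 n).trans_eq rfl
      have hpos : (0:ℝ) < (h (ℓ n) : ℝ) := by
        have := h1 (ℓ n); positivity
      have hnc : (J n).ncard = 1 := by simp [hJ]
      rw [hnc]
      push_cast
      calc (1:ℝ)/(h (ℓ n)) ≤ 1/2^n := one_div_le_one_div_of_le (by positivity) h2
        _ = (1/2)^n := by rw [one_div_pow]
  · exact ⟨fun _ => 0, a, ha0, hamono, subset_rfl⟩
  · ext x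
    simp only [Set.mem_union, Set.mem_setOf_eq, Set.mem_univ, iff_true]
    by_cases hx : ∃ᶠ n in atTop, restrIco x (a n) (a (n+1)) ∈ J n
    · left; exact hx
    · right
      rw [not_frequently] at hx
      filter_upwards [hx] with n hn
      simp only [hJ, Set.mem_singleton_iff] at hn
      obtain ⟨i, hi⟩ := Function.ne_iff.mp hn
      by_cases hc : a n ≤ i ∧ i < a (n+1)
      · refine ⟨i, hc.1, hc.2, ?_⟩
        simpa [restrIco, hc] using hi
      · exfalso; apply hi; simp [restrIco, hc]
end

section
/- fN(Fin) is not orthogonal to M_-: for every F ∈ M_- and every A ∈ fN(Fin), the complement ω^ω \ F is not contained in A; in particular, there are no A ∈ fN(Fin) and B ∈ M_- with A ∪ B = ω^ω. -/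
open Filter Set

theorem key19 (F A : Set (ℕ → ℕ)) (hF : Mminus F) (hA : fNFin A) : ¬ (Fᶜ ⊆ A) := by
  classical
  obtain ⟨xF, a, ha0, hmono, hFsub⟩ := hF
  obtain ⟨S, hSfin, hAsub⟩ := hA
  set p : ℕ → ℕ := fun k => a (2*k+1) - 1 with hp_def
  have ha_ge : ∀ m, m ≤ a m := fun m => hmono.le_apply
  have hp_lt : ∀ k, p k < a (2*k+1) := by
    intro k
    have h1 : 2*k+1 ≤ a (2*k+1) := ha_ge _
    simp only [hp_def]; omega
  have hp_ge : ∀ k, a (2*k) ≤ p k := by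
    intro k
    have h1 := hmono (show 2*k < 2*k+1 by omega)
    simp only [hp_def]; omega
  have hpmono : StrictMono p := by
    intro i j hij
    have h1 := hmono (show 2*i+1 < 2*j+1 by omega)
    have h2 : 2*i+1 ≤ a (2*i+1) := ha_ge _
    simp only [hp_def]; omega
  set val : ℕ → ℕ := fun k => 1 + (Finset.Ioc (p k) (p (k+1))).sup
      (fun n => ((hSfin n).toFinset).sup
        (fun s => if h : p k < n then s ⟨p k, h⟩ else 0)) with hval_def
  set x : ℕ → ℕ := fun i => if h : ∃ k, p k = i then val (Nat.find h) else xF i with hx_def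
  have hx_p : ∀ k, x (p k) = val k := by
    intro k
    have h : ∃ j, p j = p k := ⟨k, rfl⟩
    have hfind : Nat.find h = k := hpmono.injective (Nat.find_spec h)
    simp only [hx_def, dif_pos h, hfind]
  have hx_eq : ∀ i, (∀ k, p k ≠ i) → x i = xF i := by
    intro i hi
    simp only [hx_def, dif_neg (not_exists.mpr hi)]
  intro hsub
  have hxnotF : x ∉ F := by
    intro hx
    have hev := hFsub hx
    have hfreq : ∃ᶠ n in Filter.atTop,
        ¬ ∃ i, a n ≤ i ∧ i < a (n+1) ∧ x i ≠ xF i := by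
      rw [Filter.frequently_atTop]
      intro N
      refine ⟨2*N+1, by omega, ?_⟩
      rintro ⟨i, hi1, hi2, hi3⟩
      apply hi3
      apply hx_eq
      intro k hk
      rcases le_or_gt k N with h | h
      · have h1 : p k ≤ p N := hpmono.monotone h
        have h2 := hp_lt N
        omega
      · have h1 : p (N+1) ≤ p k := hpmono.monotone h
        have h2 : a (2*(N+1)) ≤ p (N+1) := hp_ge (N+1)
        have h3 : (2*N+1)+1 = 2*(N+1) := by ring
        rw [h3] at hi2
        omega
    obtain ⟨n, h1, h2⟩ := (hev.and_frequently hfreq).exists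
    exact h2 h1
  have hxnotA : x ∉ A := by
    intro hx
    have hfreq := hAsub hx
    have hev : ∀ᶠ n in Filter.atTop, ¬ ((fun i : Fin n => x i) ∈ S n) := by
      rw [Filter.eventually_atTop]
      refine ⟨p 0 + 1, ?_⟩
      intro n hn hmem
      have hex : ∃ k, n ≤ p (k+1) := ⟨n, le_trans (by omega) hpmono.le_apply⟩
      set k := Nat.find hex with hk_def
      have hk2 : n ≤ p (k+1) := Nat.find_spec hex
      have hk1 : p k < n := by
        rcases Nat.eq_zero_or_pos k with h0 | h0
        · rw [h0]; omega
        · have hmin := Nat.find_min hex (m := k-1) (by omega)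
          have hkk : k - 1 + 1 = k := by omega
          rw [hkk] at hmin
          omega
      have hmemFin : n ∈ Finset.Ioc (p k) (p (k+1)) := Finset.mem_Ioc.mpr ⟨hk1, hk2⟩
      have h1 : ((hSfin n).toFinset).sup
            (fun s => if h : p k < n then s ⟨p k, h⟩ else 0)
          ≤ (Finset.Ioc (p k) (p (k+1))).sup
            (fun n => ((hSfin n).toFinset).sup
              (fun s => if h : p k < n then s ⟨p k, h⟩ else 0)) :=
        Finset.le_sup (f := fun n => ((hSfin n).toFinset).sup
              (fun s => if h : p k < n then s ⟨p k, h⟩ else 0)) hmemFin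
      have h2 : (if h : p k < n then (fun i : Fin n => x i) ⟨p k, h⟩ else 0)
          ≤ ((hSfin n).toFinset).sup
            (fun s => if h : p k < n then s ⟨p k, h⟩ else 0) :=
        Finset.le_sup (f := fun s : Fin n → ℕ => if h : p k < n then s ⟨p k, h⟩ else 0)
          ((hSfin n).mem_toFinset.mpr hmem)
      rw [dif_pos hk1] at h2
      have h3 := hx_p k
      simp only [hval_def] at h3
      have h4 := le_trans h2 h1
      change x (p k) ≤ _ at h4
      rw [h3, Nat.add_comm] at h4
      exact Nat.not_succ_le_self _ h4
    obtain ⟨n, h1, h2⟩ := (hfreq.and_eventually hev).exists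
    exact h2 h1
  exact hxnotA (hsub hxnotF)

theorem stmt19 :
    (∀ F A : Set (ℕ → ℕ), Mminus F → fNFin A → ¬ (Fᶜ ⊆ A)) ∧
    ¬ (∃ A B : Set (ℕ → ℕ), fNFin A ∧ Mminus B ∧ A ∪ B = Set.univ) := by
  constructor
  · exact fun F A hF hA => key19 F A hF hA
  · rintro ⟨A, B, hA, hB, hU⟩
    apply key19 B A hB hA
    intro x hx
    have : x ∈ A ∪ B := hU ▸ Set.mem_univ x
    exact this.resolve_right hx
end
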